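/- Let E be a finite-dimensional real inner product space, K ⊆ E a nonempty closed convex set, and F : E → E continuous and pseudomonotone on K. Then the solution set SOL(K, F) = {x ∈ K | ⟪F x, y − x⟫ ≥ 0 for all y ∈ K} is convex. -/

import Mathlib

/-!
By pseudomonotonicity every solution of the variational inequality solves the Minty
inequality `⟪F y, y - x⟫ ≥ 0` for all `y ∈ K`; conversely, testing the Minty inequality at
`x + t (y - x)` and letting `t → 0⁺` recovers the variational inequality, by continuity of `F`
and convexity of `K`. So `SOL(K, F)` equals the Minty solution set, which is `K` intersected
with the half-spaces `{x | ⟪F y, x⟫ ≤ ⟪F y, y⟫}` for `y ∈ K`, hence convex.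
-/

open RealInnerProductSpace Filter Topology

section VariationalInequality

variable {E : Type*} [NormedAddCommGroup E] [InnerProductSpace ℝ E]

def PseudomonotoneOn (F : E → E) (K : Set E) : Prop :=
  ∀ x ∈ K, ∀ y ∈ K, 0 ≤ ⟪F x, y - x⟫ → 0 ≤ ⟪F y, y - x⟫

def viSolutionSet (K : Set E) (F : E → E) : Set E :=
  {x ∈ K | ∀ y ∈ K, 0 ≤ ⟪F x, y - x⟫}

def mintySolutionSet (K : Set E) (F : E → E) : Set E :=
  {x ∈ K | ∀ y ∈ K, 0 ≤ ⟪F y, y - x⟫}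

variable {K : Set E} {F : E → E}

theorem PseudomonotoneOn.viSolutionSet_subset_mintySolutionSet (hF : PseudomonotoneOn F K) :
    viSolutionSet K F ⊆ mintySolutionSet K F :=
  fun x ⟨hx, hsol⟩ => ⟨hx, fun y hy => hF x hx y hy (hsol y hy)⟩

theorem mintySolutionSet_subset_viSolutionSet (hK : Convex ℝ K) (hF : ContinuousOn F K) :
    mintySolutionSet K F ⊆ viSolutionSet K F := by
  rintro x ⟨hx, hminty⟩
  refine ⟨hx, fun y hy => ?_⟩
  set z : ℝ → E := ⇑(AffineMap.lineMap x y : ℝ →ᵃ[ℝ] E)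
  have hz0 : z 0 = x := AffineMap.lineMap_apply_zero x y
  have hzK : Set.MapsTo z (Set.Icc 0 1) K := fun t ht => hK.lineMap_mem hx hy ht
  have hpos : ∀ t ∈ Set.Ioc (0 : ℝ) 1, 0 ≤ ⟪F (z t), y - x⟫ := by
    intro t ht
    have h := hminty (z t) (hzK (Set.Ioc_subset_Icc_self ht))
    have hzx : z t - x = t • (y - x) := AffineMap.lineMap_vsub_left x y t
    rwa [hzx, real_inner_smul_right, mul_nonneg_iff_of_pos_left ht.1] at h
  have hcont : ContinuousWithinAt (fun t => ⟪F (z t), y - x⟫) (Set.Ioi 0) 0 := by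
    have hFz : ContinuousWithinAt (F ∘ z) (Set.Icc 0 1) 0 :=
      (hF.continuousWithinAt (hz0 ▸ hx)).comp
        (AffineMap.lineMap_continuous (R := ℝ)).continuousWithinAt hzK
    exact ((hFz.mono_of_mem_nhdsWithin (Icc_mem_nhdsGT one_pos)).inner
      continuousWithinAt_const)
  have hlim : 0 ≤ ⟪F (z 0), y - x⟫ :=
    ge_of_tendsto hcont (mem_of_superset (Ioc_mem_nhdsGT one_pos) hpos)
  rwa [hz0] at hlim

theorem convex_mintySolutionSet (hK : Convex ℝ K) (F : E → E) :
    Convex ℝ (mintySolutionSet K F) := by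
  have hhalf : ∀ y, Convex ℝ {x | ⟪F y, x⟫ ≤ ⟪F y, y⟫} := fun y =>
    convex_halfSpace_le (innerₛₗ ℝ (F y)).isLinear _
  convert hK.inter (convex_iInter₂ fun y (_ : y ∈ K) => hhalf y) using 1
  ext x
  simp [mintySolutionSet, inner_sub_right]

end VariationalInequality

theorem stmt_8_general {E : Type*} [NormedAddCommGroup E] [InnerProductSpace ℝ E]
    (K : Set E) (hKconv : Convex ℝ K)
    (F : E → E) (hF : Continuous F)
    (hpseudo : ∀ x ∈ K, ∀ y ∈ K, 0 ≤ ⟪F x, y - x⟫ → 0 ≤ ⟪F y, y - x⟫) :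
    Convex ℝ {x ∈ K | ∀ y ∈ K, 0 ≤ ⟪F x, y - x⟫} := by
  change Convex ℝ (viSolutionSet K F)
  rw [(PseudomonotoneOn.viSolutionSet_subset_mintySolutionSet hpseudo).antisymm
    (mintySolutionSet_subset_viSolutionSet hKconv hF.continuousOn)]
  exact convex_mintySolutionSet hKconv F

theorem stmt_8 {E : Type*} [NormedAddCommGroup E] [InnerProductSpace ℝ E]
    [FiniteDimensional ℝ E]
    (K : Set E) (hK : K.Nonempty) (hKc : IsClosed K) (hKconv : Convex ℝ K)
    (F : E → E) (hF : Continuous F)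
    (hpseudo : ∀ x ∈ K, ∀ y ∈ K, 0 ≤ ⟪F x, y - x⟫ → 0 ≤ ⟪F y, y - x⟫) :
    Convex ℝ {x ∈ K | ∀ y ∈ K, 0 ≤ ⟪F x, y - x⟫} :=
  stmt_8_general K hKconv F hF hpseudo
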